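/- arXiv:math/0511035 — 4 statements merged into one kernel-verified Lean document; each statement's English description precedes it below -/
import Mathlib

section
/- The Rauzy operation a preserves irreducibility: if π is an irreducible permutation of {1,…,m} (i.e., π({1,…,k}) = {1,…,k} only when k = m), then aπ, defined by aπ(j) = π(j) for j ≤ π⁻¹(m), aπ(j) = π(m) for j = π⁻¹(m)+1, and aπ(j) = π(j−1) otherwise, is also irreducible. -/
/-!
Writing `q = π⁻¹(m) + 1`, the Rauzy move is `aπ = π ∘ τ`, where the position shift `τ` fixes
the positions before `q`, sends `q` to the last position and moves every later position one step
back; `τ` is injective, so `aπ` is a bijection. If `aπ` fixed an initial segment `{1, …, k}` with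
`k < m`, then either `π⁻¹(m) ≤ k`, and `aπ(π⁻¹(m)) = m` lies outside the segment, or the whole
segment lies before `π⁻¹(m)`, where `aπ` agrees with `π`, contradicting the irreducibility of `π`.
-/

namespace Rauzy

variable {m : ℕ}

def shift (q : ℕ) (j : Fin m) : Fin m :=
  if (j : ℕ) < q then j
  else if (j : ℕ) = q then ⟨m - 1, Nat.sub_lt (Nat.zero_lt_of_lt j.isLt) one_pos⟩
  else ⟨j - 1, lt_of_le_of_lt (Nat.sub_le _ _) j.isLt⟩

theorem shift_injective (q : ℕ) : Function.Injective (shift q : Fin m → Fin m) := by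
  intro i j hij
  unfold shift at hij
  split_ifs at hij <;> simp only [Fin.ext_iff] at hij ⊢ <;> omega

theorem shift_bijective (q : ℕ) : Function.Bijective (shift q : Fin m → Fin m) :=
  Finite.injective_iff_bijective.mp (shift_injective q)

theorem image_lt_ne_of_le_apply (f : Fin m → Fin m) {k : ℕ} {i : Fin m} (hi : (i : ℕ) < k)
    (hfi : k ≤ f i) : f '' {j : Fin m | (j : ℕ) < k} ≠ {j : Fin m | (j : ℕ) < k} := by
  intro h
  have hmem : f i ∈ f '' {j : Fin m | (j : ℕ) < k} := Set.mem_image_of_mem f hi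
  rw [h] at hmem
  exact absurd hmem (not_lt.mpr hfi)

end Rauzy

open Rauzy

/-- The Rauzy operation `a` preserves irreducibility. Indices are 0-based:
the symbol `m` of the paper corresponds to `Fin.last`, i.e. `⟨m-1, _⟩`. -/
theorem rauzy_a_preserves_irreducible (m : ℕ) (hm : 0 < m)
    (π : Equiv.Perm (Fin m)) (σ : Fin m → Fin m)
    (p : Fin m) (hp : p = π.symm ⟨m - 1, Nat.sub_lt hm one_pos⟩)
    (h1 : ∀ j : Fin m, (j : ℕ) ≤ (p : ℕ) → σ j = π j)
    (h2 : ∀ j : Fin m, (j : ℕ) = (p : ℕ) + 1 → σ j = π ⟨m - 1, Nat.sub_lt hm one_pos⟩)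
    (h3 : ∀ j : Fin m, (p : ℕ) + 1 < (j : ℕ) →
      σ j = π ⟨(j : ℕ) - 1, lt_of_le_of_lt (Nat.sub_le _ _) j.isLt⟩)
    (hirr : ∀ k : ℕ, 0 < k → k < m →
      (⇑π) '' {i : Fin m | (i : ℕ) < k} ≠ {i : Fin m | (i : ℕ) < k}) :
    Function.Bijective σ ∧
    ∀ k : ℕ, 0 < k → k < m →
      σ '' {i : Fin m | (i : ℕ) < k} ≠ {i : Fin m | (i : ℕ) < k} := by
  have hσ : σ = π ∘ shift (p + 1) := by
    funext j
    simp only [Function.comp_apply, shift]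
    split_ifs with hlt heq
    · exact h1 j (by omega)
    · exact h2 j heq
    · exact h3 j (by omega)
  refine ⟨hσ ▸ π.bijective.comp (shift_bijective _), fun k hk hkm => ?_⟩
  by_cases hpk : (p : ℕ) < k
  · refine image_lt_ne_of_le_apply σ hpk ?_
    rw [h1 p le_rfl, hp, π.apply_symm_apply]
    exact Nat.le_sub_one_of_lt hkm
  · refine fun heq => hirr k hk hkm ((Set.image_congr fun i hi => ?_).trans heq)
    exact (h1 i (by have : (i : ℕ) < k := hi; omega)).symm
end

section
/- The Rauzy operation b preserves irreducibility: if π is an irreducible permutation of {1,…,m}, then bπ, defined by bπ(j) = π(j) if π(j) ≤ π(m), bπ(j) = π(j)+1 if π(m) < π(j) < m, and bπ(j) = π(m)+1 if π(j) = m, is also an irreducible permutation. -/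
/-! On values, `b` fixes everything up to `q = π(m)`, so it can only differ from `π` on the
preimage of values above `q`. If `b π` fixed the initial segment `{1, …, k}` with `k ≤ q`, it
would agree with `π` there and `π` would fix it too. If `k > q`, the value `q` must be hit by
some `j ≤ k`; but `b π` takes the value `q` only where `π` does, namely at `j = m > k`. -/

/-- `b` acting on values, 0-based: `q` is the value `π(m)` and `t` the largest value. -/
def rauzyB (q t x : ℕ) : ℕ := if x ≤ q then x else if x < t then x + 1 else q + 1

theorem rauzyB_injOn (q t : ℕ) : Set.InjOn (rauzyB q t) (Set.Iic t) := by
  intro x hx y hy h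
  simp only [Set.mem_Iic] at hx hy
  unfold rauzyB at h
  split_ifs at h <;> omega

theorem rauzyB_eq_self_of_le {q t x : ℕ} (h : rauzyB q t x ≤ q) : rauzyB q t x = x := by
  unfold rauzyB at h ⊢
  split_ifs at h ⊢ <;> omega

/-- Indices are 0-based: the symbol `m` of the paper corresponds to the index `m - 1`. -/
theorem rauzy_b_preserves_irreducible (m : ℕ) (hm : 0 < m)
    (π : Equiv.Perm (Fin m)) (σ : Fin m → Fin m)
    (q : Fin m) (hq : q = π ⟨m - 1, Nat.sub_lt hm one_pos⟩)
    (h1 : ∀ j : Fin m, ((π j : ℕ)) ≤ (q : ℕ) → σ j = π j)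
    (h2 : ∀ j : Fin m, (q : ℕ) < (π j : ℕ) → (π j : ℕ) < m - 1 →
      ((σ j : ℕ)) = (π j : ℕ) + 1)
    (h3 : ∀ j : Fin m, (π j : ℕ) = m - 1 → ((σ j : ℕ)) = (q : ℕ) + 1)
    (hirr : ∀ k : ℕ, 0 < k → k < m →
      (⇑π) '' {i : Fin m | (i : ℕ) < k} ≠ {i : Fin m | (i : ℕ) < k}) :
    Function.Bijective σ ∧
    ∀ k : ℕ, 0 < k → k < m →
      σ '' {i : Fin m | (i : ℕ) < k} ≠ {i : Fin m | (i : ℕ) < k} := by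
  have hσ : ∀ j, (σ j : ℕ) = rauzyB q (m - 1) (π j) := by
    intro j
    unfold rauzyB
    split_ifs with hle hlt
    · rw [h1 j hle]
    · exact h2 j (by omega) hlt
    · exact h3 j (by omega)
  have hfix : ∀ j, (σ j : ℕ) ≤ q → σ j = π j := fun j h =>
    Fin.ext (by rw [hσ j] at h ⊢; exact rauzyB_eq_self_of_le h)
  have hinj : Function.Injective σ := fun a b hab =>
    π.injective <| Fin.ext <| rauzyB_injOn q (m - 1) (Nat.le_sub_one_of_lt (π a).isLt)
      (Nat.le_sub_one_of_lt (π b).isLt)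
      (by rw [← hσ, ← hσ, hab])
  refine ⟨Finite.injective_iff_bijective.mp hinj, fun k hk0 hkm hstab => ?_⟩
  rcases le_or_gt k q with hkq | hqk
  · refine hirr k hk0 hkm ((Set.image_congr fun j hj => ?_).trans hstab)
    have hσj : (σ j : ℕ) < k :=
      show σ j ∈ {i : Fin m | (i : ℕ) < k} from hstab ▸ Set.mem_image_of_mem σ hj
    exact (hfix j (by omega)).symm
  · obtain ⟨j, hj, hσj⟩ : q ∈ σ '' {i : Fin m | (i : ℕ) < k} := by rw [hstab]; exact hqk
    have hj_top : j = ⟨m - 1, Nat.sub_lt hm one_pos⟩ :=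
      π.injective (by rw [← hfix j (hσj ▸ le_rfl), hσj, hq])
    have hjk : (j : ℕ) < k := hj
    rw [hj_top, Fin.val_mk] at hjk
    omega
end

section
/- Let Q be a fixed m×m matrix with strictly positive integer entries. Then there exists a constant β > 0 depending only on Q and m such that for any m×m matrix M with nonnegative integer entries and no zero column, writing A = Q·M·Q, one has β⁻¹ ≤ ‖A‖^m / (∏_j Σ_i A_{ij}) ≤ β, where ‖A‖ = max_j Σ_i A_{ij}. -/
open Finset

/-- The maximum column-sum norm `‖A‖ = max_j ∑_i |A_{ij}|`. -/
noncomputable def colNorm {m : ℕ} [NeZero m] (A : Matrix (Fin m) (Fin m) ℝ) : ℝ :=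
  Finset.univ.sup' Finset.univ_nonempty (fun j => ∑ i, |A i j|)

/-- For a fixed matrix `Q` with entries `≥ 1` there is a constant `β > 0`,
depending only on `Q` (and `m`), such that for every nonnegative integer matrix `M`
with no zero column, the matrix `A = Q M Q` satisfies
`β⁻¹ ≤ ‖A‖^m / ∏_j ∑_i A_{ij} ≤ β`. -/
theorem norm_pow_comparable_product_of_column_sums {m : ℕ} [NeZero m]
    (Q : Matrix (Fin m) (Fin m) ℝ)
    (hQint : ∀ i j, ∃ n : ℕ, Q i j = n) (hQpos : ∀ i j, 1 ≤ Q i j) :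
    ∃ β : ℝ, 0 < β ∧ ∀ M : Matrix (Fin m) (Fin m) ℝ,
      (∀ i j, ∃ n : ℕ, M i j = n) → (∀ j, ∃ i, 1 ≤ M i j) →
      β⁻¹ ≤ colNorm (Q * M * Q) ^ m / (∏ j, ∑ i, (Q * M * Q) i j) ∧
      colNorm (Q * M * Q) ^ m / (∏ j, ∑ i, (Q * M * Q) i j) ≤ β := by
  classical
  have hm : 0 < m := Nat.pos_of_ne_zero (NeZero.ne m)
  set C : ℝ := Finset.univ.sup' (Finset.univ_nonempty (α := Fin m × Fin m))
      (fun p => Q p.1 p.2) with hCdef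
  have hQle : ∀ i j, Q i j ≤ C := fun i j =>
    Finset.le_sup' (f := fun p : Fin m × Fin m => Q p.1 p.2) (Finset.mem_univ (i, j))
  obtain ⟨p0⟩ := Finset.univ_nonempty (α := Fin m × Fin m)
  have hC1 : 1 ≤ C := le_trans (hQpos p0.1 p0.2) (hQle p0.1 p0.2)
  have hCpos : 0 < C := lt_of_lt_of_le one_pos hC1
  refine ⟨C ^ (2 * m), by positivity, ?_⟩
  intro M hMint hMcol
  have hM0 : ∀ k l, 0 ≤ M k l := fun k l => by
    obtain ⟨n, hn⟩ := hMint k l; rw [hn]; positivity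
  set T : ℝ := ∑ k, ∑ l, M k l with hTdef
  have hT1 : 1 ≤ T := by
    obtain ⟨i, hi⟩ := hMcol ⟨0, hm⟩
    calc (1 : ℝ) ≤ M i ⟨0, hm⟩ := hi
      _ ≤ ∑ l, M i l := Finset.single_le_sum (fun l _ => hM0 i l) (Finset.mem_univ _)
      _ ≤ T := Finset.single_le_sum (f := fun k => ∑ l, M k l)
          (fun k _ => Finset.sum_nonneg fun l _ => hM0 k l) (Finset.mem_univ i)
  have hTpos : 0 < T := lt_of_lt_of_le one_pos hT1
  have hA : ∀ i j, (Q * M * Q) i j = ∑ l, ∑ k, Q i k * M k l * Q l j := by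
    intro i j
    simp [Matrix.mul_apply, Finset.sum_mul]
  have hApos : ∀ i j, 0 ≤ (Q * M * Q) i j := by
    intro i j
    rw [hA]
    refine Finset.sum_nonneg fun l _ => Finset.sum_nonneg fun k _ => ?_
    have h1 := hQpos i k; have h2 := hQpos l j; have h3 := hM0 k l
    positivity
  -- column sum bounds
  have hSlow : ∀ j, (m : ℝ) * T ≤ ∑ i, (Q * M * Q) i j := by
    intro j
    have : ∀ i : Fin m, T ≤ ∑ l, ∑ k, Q i k * M k l * Q l j := by
      intro i
      rw [hTdef, Finset.sum_comm]
      refine Finset.sum_le_sum fun l _ => Finset.sum_le_sum fun k _ => ?_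
      have h1 : M k l ≤ Q i k * M k l := le_mul_of_one_le_left (hM0 k l) (hQpos i k)
      have h2 : Q i k * M k l ≤ Q i k * M k l * Q l j :=
        le_mul_of_one_le_right (mul_nonneg (le_trans zero_le_one (hQpos i k)) (hM0 k l))
          (hQpos l j)
      exact (le_mul_of_one_le_left (hM0 l k) (hQpos i l)).trans
        (le_mul_of_one_le_right (mul_nonneg (le_trans zero_le_one (hQpos i l)) (hM0 l k)) (hQpos k j))
    calc (m : ℝ) * T = ∑ _i : Fin m, T := by
          simp [Finset.sum_const, Finset.card_univ, mul_comm]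
      _ ≤ ∑ i, ∑ l, ∑ k, Q i k * M k l * Q l j := Finset.sum_le_sum fun i _ => this i
      _ = ∑ i, (Q * M * Q) i j := by simp_rw [hA]
  have hShigh : ∀ j, ∑ i, (Q * M * Q) i j ≤ C ^ 2 * ((m : ℝ) * T) := by
    intro j
    calc ∑ i, (Q * M * Q) i j = ∑ i, ∑ l, ∑ k, Q i k * M k l * Q l j := by simp_rw [hA]
      _ ≤ ∑ _i : Fin m, ∑ l, ∑ k, C * M k l * C := by
          refine Finset.sum_le_sum fun i _ => Finset.sum_le_sum fun l _ =>
            Finset.sum_le_sum fun k _ => ?_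
          have h1 : Q i k * M k l ≤ C * M k l :=
            mul_le_mul_of_nonneg_right (hQle i k) (hM0 k l)
          exact mul_le_mul h1 (hQle l j) (le_trans zero_le_one (hQpos l j))
            (mul_nonneg hCpos.le (hM0 k l))
      _ = (m : ℝ) * ∑ l, ∑ k, C * M k l * C := by
          simp [Finset.sum_const, Finset.card_univ, mul_comm]
      _ = C ^ 2 * ((m : ℝ) * T) := by
          have h : ∑ l, ∑ k, C * M k l * C = C ^ 2 * T := by
            rw [hTdef, Finset.sum_comm, Finset.mul_sum]
            refine Finset.sum_congr rfl fun k _ => ?_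
            rw [Finset.mul_sum]
            exact Finset.sum_congr rfl fun l _ => by ring
          rw [h]; ring
  set P : ℝ := ∏ j, ∑ i, (Q * M * Q) i j with hPdef
  have hP1 : ((m : ℝ) * T) ^ m ≤ P := by
    calc ((m : ℝ) * T) ^ m = ∏ _j : Fin m, ((m : ℝ) * T) := by
          simp [Finset.prod_const, Finset.card_univ]
      _ ≤ P := Finset.prod_le_prod (fun j _ => by positivity) (fun j _ => hSlow j)
  have hP2 : P ≤ (C ^ 2 * ((m : ℝ) * T)) ^ m := by
    calc P ≤ ∏ _j : Fin m, (C ^ 2 * ((m : ℝ) * T)) :=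
          Finset.prod_le_prod (fun j _ => Finset.sum_nonneg fun i _ => hApos i j)
            (fun j _ => hShigh j)
      _ = (C ^ 2 * ((m : ℝ) * T)) ^ m := by
          simp [Finset.prod_const, Finset.card_univ]
  have hPpos : 0 < P := lt_of_lt_of_le (by positivity) hP1
  have hNlow : (m : ℝ) * T ≤ colNorm (Q * M * Q) := by
    refine le_trans ?_ (Finset.le_sup' (f := fun j => ∑ i, |(Q * M * Q) i j|)
      (Finset.mem_univ (⟨0, hm⟩ : Fin m)))
    calc (m : ℝ) * T ≤ ∑ i, (Q * M * Q) i ⟨0, hm⟩ := hSlow _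
      _ = ∑ i, |(Q * M * Q) i ⟨0, hm⟩| := by
          exact Finset.sum_congr rfl fun i _ => (abs_of_nonneg (hApos i _)).symm
  have hNhigh : colNorm (Q * M * Q) ≤ C ^ 2 * ((m : ℝ) * T) := by
    refine Finset.sup'_le _ _ fun j _ => ?_
    calc ∑ i, |(Q * M * Q) i j| = ∑ i, (Q * M * Q) i j :=
          Finset.sum_congr rfl fun i _ => abs_of_nonneg (hApos i j)
      _ ≤ C ^ 2 * ((m : ℝ) * T) := hShigh j
  have hkey : (C ^ 2 * ((m : ℝ) * T)) ^ m = C ^ (2 * m) * ((m : ℝ) * T) ^ m := by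
    rw [mul_pow, pow_mul]
  have hmtpos : (0 : ℝ) < ((m : ℝ) * T) ^ m := by positivity
  have hN0 : 0 ≤ colNorm (Q * M * Q) := le_trans (by positivity) hNlow
  constructor
  · have : ((m : ℝ) * T) ^ m / (C ^ (2 * m) * ((m : ℝ) * T) ^ m)
        ≤ colNorm (Q * M * Q) ^ m / P := by
      refine div_le_div₀ (by positivity) (pow_le_pow_left₀ (by positivity) hNlow m)
        hPpos (le_trans hP2 (le_of_eq hkey))
    refine le_trans (le_of_eq ?_) this
    rw [eq_div_iff (by positivity)]
    field_simp
  · have : colNorm (Q * M * Q) ^ m / P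
        ≤ (C ^ (2 * m) * ((m : ℝ) * T) ^ m) / (((m : ℝ)) * T) ^ m := by
      refine div_le_div₀ (by positivity)
        (le_trans (pow_le_pow_left₀ hN0 hNhigh m) (le_of_eq hkey)) (by positivity) hP1
    refine le_trans this (le_of_eq ?_)
    field_simp
end

section
/- Let (λ, h, a, π) be a zippered rectangle and define δ_i = a_{i−1} − a_i for i = 1,…,m (with a₀ = a_{m+1} = 0). Then the map (λ, h, a, π) ↦ (λ, π, δ) is injective: the data (λ, π, δ) determine h and a uniquely, via the formulas a_i = −(δ₁ + ⋯ + δ_i) and h_r = −Σ_{i=1}^{r−1} δ_i + Σ_{l=1}^{π(r)−1} δ_{π⁻¹(l)}. -/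
/-!
Both formulas are telescoping sums. Along the interval order, `-a` increases by `δ i` at step `i`.
Along the permuted order, the zipper equation at `i = π⁻¹(j)` combined with
`δ_{π⁻¹(j)} = a_{π⁻¹(j)-1} - a_{π⁻¹(j)}` says that `g j := h_{π⁻¹(j)} - a_{π⁻¹(j)-1}` increases by
`δ_{π⁻¹(j)}` from `j` to `j + 1`, and the equation at `i = 0` gives `g 1 = h₀ - a₀ = 0`.
Finally `h_r = a_{r-1} + g (π r)`.
-/

open Finset

theorem eq_sum_Icc_of_succ_eq_add {M : Type*} [AddCommMonoid M] {u d : ℕ → M} {n : ℕ}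
    (h0 : u 0 = 0) (hstep : ∀ k < n, u (k + 1) = u k + d (k + 1)) :
    u n = ∑ k ∈ Icc 1 n, d k := by
  induction n with
  | zero => simp [h0]
  | succ n ih =>
    rw [sum_Icc_succ_top (Nat.le_add_left 1 n), hstep n n.lt_succ_self,
      ih fun k hk => hstep k (hk.trans n.lt_succ_self)]

theorem eq_neg_sum_Icc_of_pred_sub_eq {G : Type*} [AddCommGroup G] {a δ : ℕ → G} {n : ℕ}
    (h0 : a 0 = 0) (hδ : ∀ i, 1 ≤ i → i ≤ n → δ i = a (i - 1) - a i) :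
    a n = -∑ k ∈ Icc 1 n, δ k := by
  have hsum : -a n = ∑ k ∈ Icc 1 n, δ k :=
    eq_sum_Icc_of_succ_eq_add (u := fun k => -a k) (by simp [h0]) fun k hk => by
      rw [hδ (k + 1) (by omega) hk, Nat.add_sub_cancel]
      abel
  rw [← hsum, neg_neg]

theorem sub_eq_sum_Icc_delta_perm {G : Type*} [AddCommGroup G] {m : ℕ} {π πinv : ℕ → ℕ}
    {h a δ : ℕ → G}
    (hπ0 : π 0 = 0)
    (hinvr : ∀ i, 1 ≤ i → i ≤ m → π (πinv i) = i ∧ 1 ≤ πinv i ∧ πinv i ≤ m)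
    (ha0 : a 0 = 0) (hh0 : h 0 = 0)
    (hzip : ∀ i, i ≤ m → h i - a i = h (πinv (π i + 1)) - a (πinv (π i + 1) - 1))
    (hδ : ∀ i, 1 ≤ i → i ≤ m → δ i = a (i - 1) - a i)
    {j : ℕ} (hj1 : 1 ≤ j) (hjm : j ≤ m) :
    h (πinv j) - a (πinv j - 1) = ∑ l ∈ Icc 1 (j - 1), δ (πinv l) := by
  obtain ⟨n, rfl⟩ : ∃ n, j = n + 1 := ⟨j - 1, by omega⟩
  rw [Nat.add_sub_cancel]
  refine eq_sum_Icc_of_succ_eq_add (u := fun k => h (πinv (k + 1)) - a (πinv (k + 1) - 1))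
    ?_ fun k hk => ?_
  · simpa [hπ0, ha0, hh0] using (hzip 0 m.zero_le).symm
  · obtain ⟨hπinv, hinv1, hinvm⟩ := hinvr (k + 1) (by omega) (by omega)
    have hz := hzip (πinv (k + 1)) hinvm
    rw [hπinv] at hz
    rw [hδ _ hinv1 hinvm, ← hz]
    abel

theorem zippered_rectangle_determined_by_delta_general (m : ℕ)
    (π πinv : ℕ → ℕ)
    (hπmap : ∀ i, 1 ≤ i → i ≤ m → 1 ≤ π i ∧ π i ≤ m)
    (hπ0 : π 0 = 0)
    (hinvl : ∀ i, i ≤ m → πinv (π i) = i)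
    (hinvr : ∀ i, 1 ≤ i → i ≤ m → π (πinv i) = i ∧ 1 ≤ πinv i ∧ πinv i ≤ m)
    (h a δ : ℕ → ℝ)
    (ha0 : a 0 = 0) (hh0 : h 0 = 0)
    (hzip : ∀ i, i ≤ m →
      h i - a i = h (πinv (π i + 1)) - a (πinv (π i + 1) - 1))
    (hδ : ∀ i, 1 ≤ i → i ≤ m → δ i = a (i - 1) - a i) :
    (∀ i, 1 ≤ i → i ≤ m → a i = -(∑ k ∈ Finset.Icc 1 i, δ k)) ∧
    (∀ r, 1 ≤ r → r ≤ m →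
      h r = -(∑ i ∈ Finset.Icc 1 (r - 1), δ i)
        + ∑ l ∈ Finset.Icc 1 (π r - 1), δ (πinv l)) := by
  have ha : ∀ i, i ≤ m → a i = -∑ k ∈ Icc 1 i, δ k := fun i hi =>
    eq_neg_sum_Icc_of_pred_sub_eq ha0 fun k hk1 hki => hδ k hk1 (hki.trans hi)
  refine ⟨fun i _ hi => ha i hi, fun r hr1 hrm => ?_⟩
  obtain ⟨hπr1, hπrm⟩ := hπmap r hr1 hrm
  have hg := sub_eq_sum_Icc_delta_perm hπ0 hinvr ha0 hh0 hzip hδ hπr1 hπrm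
  rw [hinvl r hrm] at hg
  rw [← hg, ← ha (r - 1) (by omega)]
  ring

/-- The δ-coordinates determine a zippered rectangle: if `(λ, h, a, π)` satisfies
the zippered-rectangle equations
`h_i − a_i = h_{π⁻¹(π(i)+1)} − a_{π⁻¹(π(i)+1)−1}` for `i = 0,…,m` (with the
conventions `a₀ = h₀ = a_{m+1} = h_{m+1} = 0`, `π(0) = 0`, `π⁻¹(m+1) = m+1`) and
`δ_i = a_{i−1} − a_i`, then `a` and `h` are given by the explicit formulas
`a_i = −(δ₁ + ⋯ + δ_i)` and
`h_r = −∑_{i=1}^{r−1} δ_i + ∑_{l=1}^{π(r)−1} δ_{π⁻¹(l)}`.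
In particular the map `(λ, h, a, π) ↦ (λ, π, δ)` is injective.
Indices are 1-based; `π` and its inverse `πinv` act on `{1,…,m}`. -/
theorem zippered_rectangle_determined_by_delta (m : ℕ) (hm : 0 < m)
    (π πinv : ℕ → ℕ)
    (hπmap : ∀ i, 1 ≤ i → i ≤ m → 1 ≤ π i ∧ π i ≤ m)
    (hπ0 : π 0 = 0)
    (hinvl : ∀ i, i ≤ m → πinv (π i) = i)
    (hinvr : ∀ i, 1 ≤ i → i ≤ m → π (πinv i) = i ∧ 1 ≤ πinv i ∧ πinv i ≤ m)
    (hinvtop : πinv (m + 1) = m + 1)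
    (h a δ : ℕ → ℝ)
    (ha0 : a 0 = 0) (hh0 : h 0 = 0) (hatop : a (m + 1) = 0) (hhtop : h (m + 1) = 0)
    (hzip : ∀ i, i ≤ m →
      h i - a i = h (πinv (π i + 1)) - a (πinv (π i + 1) - 1))
    (hδ : ∀ i, 1 ≤ i → i ≤ m → δ i = a (i - 1) - a i) :
    (∀ i, 1 ≤ i → i ≤ m → a i = -(∑ k ∈ Finset.Icc 1 i, δ k)) ∧
    (∀ r, 1 ≤ r → r ≤ m →
      h r = -(∑ i ∈ Finset.Icc 1 (r - 1), δ i)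
        + ∑ l ∈ Finset.Icc 1 (π r - 1), δ (πinv l)) :=
  zippered_rectangle_determined_by_delta_general m π πinv hπmap hπ0 hinvl hinvr h a δ ha0 hh0 hzip
    hδ
end
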